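/- arXiv:1708.05859 — 2 statements merged into one kernel-verified Lean document; each statement's English description precedes it below -/
import Mathlib

section
/- Let f : C_n → ℝ, set D = D(f) and L₂ = max{1, max_{x≠y∈C_n} ‖∇f(x) − ∇f(y)‖₁ / ‖x−y‖₁}, and let ν be the Gibbs distribution with Hamiltonian f. Let ε > 0 and let θ ∈ ℝ^n satisfy ‖θ‖₂ ≤ ε√n, ‖θ‖_∞ ≤ 1/4, and Tr(H(τ_θν)) ≤ 256 n^{1/3} D^{2/3} / ε^{2/3}. Let ξ_θ be the unique product measure on C_n whose center of mass lies at ∫_{C_n} tanh(∇f_{τ_θν}(y)) dτ_θν(y), and let Y ∼ ξ_θ. Then E‖tanh(∇f(Y)) − E Y‖₁ ≤ 64 L₂ n^{2/3} D^{1/3} / ε^{1/3} + ε n, with tanh applied entrywise. -/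
open MeasureTheory

noncomputable section

namespace Paper

/-- The Boolean hypercube `{-1,1}^n` as a finite set of vectors in `ℝ^n`. -/
def cube (n : ℕ) : Finset (Fin n → ℝ) := Fintype.piFinset fun _ => ({-1, 1} : Finset ℝ)

/-- The ℓ¹ norm of a vector. -/
def onorm {n : ℕ} (v : Fin n → ℝ) : ℝ := ∑ i, |v i|

/-- The Euclidean (ℓ²) norm of a vector. -/
def tnorm {n : ℕ} (v : Fin n → ℝ) : ℝ := Real.sqrt (∑ i, (v i) ^ 2)

/-- Discrete derivative of `f` at coordinate `i`. -/
def dd {n : ℕ} (f : (Fin n → ℝ) → ℝ) (i : Fin n) (y : Fin n → ℝ) : ℝ :=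
  (f (Function.update y i 1) - f (Function.update y i (-1))) / 2

/-- Discrete gradient of `f`. -/
def dgrad {n : ℕ} (f : (Fin n → ℝ) → ℝ) (y : Fin n → ℝ) : Fin n → ℝ := fun i => dd f i y

/-- The multilinear (harmonic) extension of `f : C_n → ℝ` to `[-1,1]^n`. -/
def mlext {n : ℕ} (f : (Fin n → ℝ) → ℝ) (x : Fin n → ℝ) : ℝ :=
  ∑ S : Finset (Fin n),
    (((2 : ℝ) ^ n)⁻¹ * ∑ y ∈ cube n, f y * ∏ i ∈ S, y i) * ∏ i ∈ S, x i

/-- The multilinear extension of the discrete gradient of `f`. -/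
def mlgrad {n : ℕ} (f : (Fin n → ℝ) → ℝ) (x : Fin n → ℝ) : Fin n → ℝ :=
  fun i => mlext (dd f i) x

/-- The Lipschitz constant `Lip(f) = max_{i,y∈C_n} |∂_i f(y)|`. -/
def lip {n : ℕ} (f : (Fin n → ℝ) → ℝ) : ℝ :=
  sSup {a | ∃ i : Fin n, ∃ y ∈ cube n, a = |dd f i y|}

/-- The Lipschitz constant of the discrete gradient:
`max_{x ≠ y ∈ C_n} ‖∇f(x) - ∇f(y)‖₁ / ‖x - y‖₁`. -/
def gradLip {n : ℕ} (f : (Fin n → ℝ) → ℝ) : ℝ :=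
  sSup {a | ∃ x ∈ cube n, ∃ y ∈ cube n, x ≠ y ∧
    a = onorm (dgrad f x - dgrad f y) / onorm (x - y)}

/-- Gaussian width of a set `K ⊆ ℝ^n`. -/
def gaussianWidth {n : ℕ} (K : Set (Fin n → ℝ)) : ℝ :=
  ∫ θ, sSup ((fun v => ∑ i, v i * θ i) '' K)
    ∂(Measure.pi fun _ : Fin n => ProbabilityTheory.gaussianReal 0 1)

/-- Gradient complexity `D(f) = GW({∇f(y) : y ∈ C_n} ∪ {0})`. -/
def gradComplexity {n : ℕ} (f : (Fin n → ℝ) → ℝ) : ℝ :=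
  gaussianWidth ((dgrad f '' (cube n : Set (Fin n → ℝ))) ∪ {0})

/-- The Gibbs distribution with Hamiltonian `f`, as a weight function on `ℝ^n`
supported on the cube. -/
def gibbs {n : ℕ} (f : (Fin n → ℝ) → ℝ) (y : Fin n → ℝ) : ℝ :=
  if y ∈ cube n then Real.exp (f y) / ∑ z ∈ cube n, Real.exp (f z) else 0

/-- The tilt `τ_θ p` of a weight function `p` on the cube. -/
def tilt {n : ℕ} (p : (Fin n → ℝ) → ℝ) (θ : Fin n → ℝ) (y : Fin n → ℝ) : ℝ :=
  p y * Real.exp (∑ i, θ i * y i) / ∑ z ∈ cube n, p z * Real.exp (∑ i, θ i * z i)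

/-- The mean (center of mass) of the tilted measure `τ_θ p`. -/
def tiltMean {n : ℕ} (p : (Fin n → ℝ) → ℝ) (θ : Fin n → ℝ) : Fin n → ℝ :=
  fun i => ∑ y ∈ cube n, tilt p θ y * y i

/-- A weight function on the cube is a product measure: the coordinates are
independent Bernoulli-type variables. -/
def IsProduct {n : ℕ} (ξ : (Fin n → ℝ) → ℝ) : Prop :=
  (∀ y, y ∉ cube n → ξ y = 0) ∧
  ∃ q : Fin n → ℝ, (∀ i, q i ∈ Set.Icc (0 : ℝ) 1) ∧
    ∀ y ∈ cube n, ξ y = ∏ i, (if y i = 1 then q i else 1 - q i)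

/-- The Wasserstein (transportation) distance between two weight functions on the cube. -/
def W1 {n : ℕ} (p q : (Fin n → ℝ) → ℝ) : ℝ :=
  sInf {w | ∃ π : (Fin n → ℝ) × (Fin n → ℝ) → ℝ,
    (∀ a, 0 ≤ π a) ∧
    (∀ x, ∑ y ∈ cube n, π (x, y) = p x) ∧
    (∀ y, ∑ x ∈ cube n, π (x, y) = q y) ∧
    w = (1 / 2) * ∑ x ∈ cube n, ∑ y ∈ cube n, π (x, y) * onorm (x - y)}

/-- `p` (the law of a random vector on the cube) is a `(ρ,δ,ε)`-tilt-mixture. -/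
def IsTiltMixture {n : ℕ} (p : (Fin n → ℝ) → ℝ) (ρ : Measure (Fin n → ℝ))
    (δ ε : ℝ) : Prop :=
  ∃ m : Measure (Fin n → ℝ), IsProbabilityMeasure m ∧
    m {θ | ¬ (tnorm θ ≤ ε * Real.sqrt n ∧ ∀ i, |θ i| ≤ 1 / 4)} = 0 ∧
    (∀ φ : (Fin n → ℝ) → ℝ,
      ∑ y ∈ cube n, φ y * p y = ∫ θ, ∑ y ∈ cube n, φ y * tilt p θ y ∂m) ∧
    ENNReal.ofReal (1 - δ) <
      m {θ | ∃ ξ, IsProduct ξ ∧ W1 (tilt p θ) ξ ≤ δ * n} ∧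
    ρ = m.map (tiltMean p)

/-- The product weight on the cube with mean vector `z ∈ [-1,1]^n`:
the law of `X(z)`. -/
def prodW {n : ℕ} (z : Fin n → ℝ) (y : Fin n → ℝ) : ℝ := ∏ i, (1 + y i * z i) / 2

/-- `q` (the law of a random vector `X` on the cube) is a `(ρ,δ)`-mixture:
there is a coupling of `X(ρ)` and `X` with `E‖X(ρ) - X‖₁ ≤ δ n`. -/
def IsMixture {n : ℕ} (q : (Fin n → ℝ) → ℝ) (ρ : Measure (Fin n → ℝ)) (δ : ℝ) : Prop :=
  ∃ π : (Fin n → ℝ) × (Fin n → ℝ) → ℝ,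
    (∀ a, 0 ≤ π a) ∧
    (∀ x ∈ cube n, ∑ y ∈ cube n, π (x, y) = ∫ z, prodW z x ∂ρ) ∧
    (∀ y, ∑ x ∈ cube n, π (x, y) = q y) ∧
    ∑ x ∈ cube n, ∑ y ∈ cube n, π (x, y) * onorm (x - y) ≤ δ * n

/-- `f_ν = log(dν/dμ)` for a weight function `p` on the cube (`μ` uniform). -/
def hamOf {n : ℕ} (p : (Fin n → ℝ) → ℝ) : (Fin n → ℝ) → ℝ :=
  fun y => Real.log ((2 : ℝ) ^ n * p y)

/-- `Tr(H(ν))` for a weight function `p` on the cube. -/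
def traceH {n : ℕ} (p : (Fin n → ℝ) → ℝ) : ℝ :=
  ∑ i, ((∑ y ∈ cube n, p y * (Real.tanh (dd (hamOf p) i y)) ^ 2) -
    (∑ y ∈ cube n, p y * Real.tanh (dd (hamOf p) i y)) ^ 2)


section Aux
variable {n : ℕ}

lemma mem_cube {y : Fin n → ℝ} : y ∈ cube n ↔ ∀ i, y i = -1 ∨ y i = 1 := by
  simp [cube, Fintype.mem_piFinset]

lemma update_mem_cube {y : Fin n → ℝ} (hy : y ∈ cube n) (k : Fin n) {a : ℝ}
    (ha : a = -1 ∨ a = 1) : Function.update y k a ∈ cube n := by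
  rw [mem_cube] at hy ⊢
  intro i
  rcases eq_or_ne i k with rfl | h
  · simpa using ha
  · simpa [Function.update_of_ne h] using hy i

lemma cube_nonempty : (cube n).Nonempty := by
  refine ⟨fun _ => 1, ?_⟩
  rw [mem_cube]; intro i; right; rfl

lemma sum_cube_prod (c : Fin n → ℝ → ℝ) :
    ∑ y ∈ cube n, ∏ i, c i (y i) = ∏ i, (c i (-1) + c i 1) := by
  rw [cube, ← Finset.prod_univ_sum]
  refine Finset.prod_congr rfl fun i _ => ?_
  rw [show ({-1,1} : Finset ℝ) = insert (-1) {1} from rfl, Finset.sum_insert (by norm_num),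
    Finset.sum_singleton]

lemma sum_cube_split (k : Fin n) (G : (Fin n → ℝ) → ℝ) :
    ∑ y ∈ cube n, G y
      = (1/2) * ∑ y ∈ cube n, (G (Function.update y k 1) + G (Function.update y k (-1))) := by
  have hσ : ∀ y ∈ cube n, Function.update y k (-(y k)) ∈ cube n := by
    intro y hy
    refine update_mem_cube hy k ?_
    rcases (mem_cube.1 hy) k with h | h <;> simp [h]
  have key : ∑ y ∈ cube n, G y = ∑ y ∈ cube n, G (Function.update y k (-(y k))) := by
    refine Finset.sum_nbij' (fun y => Function.update y k (-(y k)))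
      (fun y => Function.update y k (-(y k))) (fun y hy => hσ y hy) (fun y hy => hσ y hy)
      ?_ ?_ ?_
    · intro y _
      simp [Function.update_idem, Function.update_self]
    · intro y _
      simp [Function.update_idem, Function.update_self]
    · intro y _
      simp [Function.update_idem, Function.update_self]
  have comb : ∀ y ∈ cube n,
      G y + G (Function.update y k (-(y k)))
        = G (Function.update y k 1) + G (Function.update y k (-1)) := by
    intro y hy
    rcases (mem_cube.1 hy) k with h | h
    · rw [show Function.update y k (1:ℝ) = Function.update y k (-(y k)) by simp [h],
        show Function.update y k (-1:ℝ) = y by simp [← h]]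
      try ring
    · rw [show Function.update y k (1:ℝ) = y by simp [← h],
        show Function.update y k (-1:ℝ) = Function.update y k (-(y k)) by simp [h]]
      try ring
  have : 2 * ∑ y ∈ cube n, G y
      = ∑ y ∈ cube n, (G (Function.update y k 1) + G (Function.update y k (-1))) := by
    rw [two_mul]
    nth_rewrite 2 [key]
    rw [← Finset.sum_add_distrib]
    exact Finset.sum_congr rfl comb
  linarith

lemma tanh_half_sub (a b : ℝ) :
    Real.tanh ((a - b)/2) = (Real.exp a - Real.exp b)/(Real.exp a + Real.exp b) := by
  rw [Real.tanh_eq_sinh_div_cosh, Real.sinh_eq, Real.cosh_eq]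
  have h1 : Real.exp ((a-b)/2) * Real.exp ((a+b)/2) = Real.exp a := by
    rw [← Real.exp_add]; ring_nf
  have h2 : Real.exp (-((a-b)/2)) * Real.exp ((a+b)/2) = Real.exp b := by
    rw [← Real.exp_add]; ring_nf
  rw [div_eq_div_iff (by positivity) (by positivity)]
  linear_combination Real.exp (-((a-b)/2)) * h1 - Real.exp ((a-b)/2) * h2

lemma abs_tanh_sub_tanh (a b : ℝ) : |Real.tanh a - Real.tanh b| ≤ |a - b| := by
  have hd : ∀ x : ℝ, HasDerivAt Real.tanh (1 / Real.cosh x ^ 2) x := by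
    intro x
    have h := (Real.hasDerivAt_sinh x).div (Real.hasDerivAt_cosh x) (Real.cosh_pos x).ne'
    have e : (Real.cosh x * Real.cosh x - Real.sinh x * Real.sinh x) / Real.cosh x ^ 2
        = 1 / Real.cosh x ^ 2 := by
      rw [show Real.cosh x * Real.cosh x - Real.sinh x * Real.sinh x
          = Real.cosh x ^ 2 - Real.sinh x ^ 2 by ring, Real.cosh_sq_sub_sinh_sq]
    have hfun : Real.tanh = fun y => Real.sinh y / Real.cosh y :=
      funext fun y => Real.tanh_eq_sinh_div_cosh y
    rw [hfun, ← e]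
    exact h
  have := Convex.norm_image_sub_le_of_norm_hasDerivWithin_le
    (f := Real.tanh) (f' := fun x => 1 / Real.cosh x ^ 2) (C := 1) (s := Set.univ)
    (fun x _ => (hd x).hasDerivWithinAt)
    (fun x _ => by
      rw [Real.norm_eq_abs, abs_of_nonneg (by positivity)]
      rw [div_le_one (by positivity)]
      nlinarith [Real.one_le_cosh x])
    convex_univ (Set.mem_univ b) (Set.mem_univ a)
  simpa [Real.norm_eq_abs] using this


/-- product weight with coordinates in `S` resampled by `b` and others pinned to `z`. -/
def PP (b : Fin n → ℝ → ℝ) (S : Finset (Fin n)) (z y : Fin n → ℝ) : ℝ :=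
  ∏ i, (if i ∈ S then b i (y i) else if z i = y i then 1 else 0)

def QQ (b : Fin n → ℝ → ℝ) (S : Finset (Fin n)) (k : Fin n) (z y : Fin n → ℝ) : ℝ :=
  ∏ i ∈ Finset.univ.erase k, (if i ∈ S then b i (y i) else if z i = y i then 1 else 0)

def HH (b : Fin n → ℝ → ℝ) (h : (Fin n → ℝ) → ℝ) (S : Finset (Fin n)) (z : Fin n → ℝ) : ℝ :=
  ∑ y ∈ cube n, PP b S z y * h y

lemma PP_update (b : Fin n → ℝ → ℝ) (S : Finset (Fin n)) (k : Fin n) (a : ℝ)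
    (z y : Fin n → ℝ) :
    PP b S z (Function.update y k a)
      = (if k ∈ S then b k a else if z k = a then 1 else 0) * QQ b S k z y := by
  unfold PP QQ
  rw [← Finset.mul_prod_erase _ _ (Finset.mem_univ k), Function.update_self]
  congr 1
  exact Finset.prod_congr rfl fun i hi => by
    rw [Function.update_of_ne (Finset.ne_of_mem_erase hi)]

lemma QQ_update_z (b : Fin n → ℝ → ℝ) (S : Finset (Fin n)) (k : Fin n) (a : ℝ)
    (z y : Fin n → ℝ) : QQ b S k (Function.update z k a) y = QQ b S k z y := by
  unfold QQ
  exact Finset.prod_congr rfl fun i hi => by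
    rw [Function.update_of_ne (Finset.ne_of_mem_erase hi)]

lemma QQ_insert (b : Fin n → ℝ → ℝ) (S : Finset (Fin n)) (k : Fin n)
    (z y : Fin n → ℝ) : QQ b (insert k S) k z y = QQ b S k z y := by
  unfold QQ
  refine Finset.prod_congr rfl fun i hi => ?_
  have hik := Finset.ne_of_mem_erase hi
  simp [Finset.mem_insert, hik]

lemma QQ_nonneg (b : Fin n → ℝ → ℝ) (hb0 : ∀ i a, 0 ≤ b i a) (S : Finset (Fin n))
    (k : Fin n) (z y : Fin n → ℝ) : 0 ≤ QQ b S k z y := by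
  refine Finset.prod_nonneg fun i _ => ?_
  split
  · exact hb0 i (y i)
  · split <;> norm_num

lemma QQ_mass (b : Fin n → ℝ → ℝ) (hb1 : ∀ i, b i 1 + b i (-1) = 1) (S : Finset (Fin n))
    (k : Fin n) (z : Fin n → ℝ) (hz : z ∈ cube n) :
    ∑ y ∈ cube n, QQ b S k z y = 2 := by
  have : ∀ y : Fin n → ℝ, QQ b S k z y
      = ∏ i, (if i = k then 1 else if i ∈ S then b i (y i) else if z i = y i then 1 else 0) := by
    intro y
    unfold QQ
    rw [← Finset.mul_prod_erase _ _ (Finset.mem_univ k), if_pos rfl, one_mul]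
    exact Finset.prod_congr rfl fun i hi => by rw [if_neg (Finset.ne_of_mem_erase hi)]
  rw [Finset.sum_congr rfl fun y _ => this y]
  have hs := sum_cube_prod (n := n)
    (fun i t => if i = k then 1 else if i ∈ S then b i t else if z i = t then 1 else 0)
  rw [hs]
  rw [Finset.prod_eq_single k ?h1 ?h2]
  · norm_num
  case h1 =>
    intro i _ hik
    rw [if_neg hik, if_neg hik]
    split
    · linarith [hb1 i]
    · rcases (mem_cube.1 hz) i with h | h <;> norm_num [h]
  case h2 =>
    intro h; exact absurd (Finset.mem_univ k) h

lemma combine_half (c₁ c₂ : ℝ) (A B : (Fin n → ℝ) → ℝ) :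
    c₁ * ((1/2) * ∑ y ∈ cube n, A y) + c₂ * ((1/2) * ∑ y ∈ cube n, B y)
      = (1/2) * ∑ y ∈ cube n, (c₁ * A y + c₂ * B y) := by
  rw [Finset.sum_add_distrib, ← Finset.mul_sum, ← Finset.mul_sum]
  ring

lemma HH_split (b : Fin n → ℝ → ℝ) (h : (Fin n → ℝ) → ℝ) (S : Finset (Fin n)) (k : Fin n)
    (z : Fin n → ℝ) :
    HH b h S z = (1/2) * ∑ y ∈ cube n,
      ((if k ∈ S then b k 1 else if z k = 1 then 1 else 0) * QQ b S k z y
          * h (Function.update y k 1)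
        + (if k ∈ S then b k (-1) else if z k = (-1) then 1 else 0) * QQ b S k z y
          * h (Function.update y k (-1))) := by
  unfold HH
  rw [sum_cube_split k (fun y => PP b S z y * h y)]
  congr 1
  refine Finset.sum_congr rfl fun y _ => ?_
  rw [PP_update, PP_update]

lemma HH_insert (b : Fin n → ℝ → ℝ) (h : (Fin n → ℝ) → ℝ) (S : Finset (Fin n)) (k : Fin n)
    (hk : k ∉ S) (z : Fin n → ℝ) :
    HH b h (insert k S) z
      = b k 1 * HH b h S (Function.update z k 1)
        + b k (-1) * HH b h S (Function.update z k (-1)) := by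
  rw [HH_split b h (insert k S) k z, HH_split b h S k (Function.update z k 1),
    HH_split b h S k (Function.update z k (-1)), combine_half]
  refine congrArg _ (Finset.sum_congr rfl fun y _ => ?_)
  simp only [if_pos (Finset.mem_insert_self k S), if_neg hk, QQ_insert, QQ_update_z,
    Function.update_self]
  norm_num
  try ring

lemma HH_flip_diff (b : Fin n → ℝ → ℝ) (h : (Fin n → ℝ) → ℝ) (L : ℝ)
    (hb0 : ∀ i a, 0 ≤ b i a) (hb1 : ∀ i, b i 1 + b i (-1) = 1)
    (hLip : ∀ y ∈ cube n,
      ∀ k : Fin n, |h (Function.update y k 1) - h (Function.update y k (-1))| ≤ 2 * L)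
    (S : Finset (Fin n)) (k : Fin n) (hk : k ∉ S) (z : Fin n → ℝ) (hz : z ∈ cube n) :
    |HH b h S (Function.update z k 1) - HH b h S (Function.update z k (-1))| ≤ 2 * L := by
  have e : ∀ a : ℝ, (a = -1 ∨ a = 1) → HH b h S (Function.update z k a)
      = (1/2) * ∑ y ∈ cube n, QQ b S k z y * h (Function.update y k a) := by
    intro a ha
    rw [HH_split b h S k (Function.update z k a)]
    congr 1
    refine Finset.sum_congr rfl fun y _ => ?_
    rw [if_neg hk, if_neg hk, QQ_update_z, Function.update_self]
    rcases ha with rfl | rfl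
    · rw [if_neg (by norm_num : ¬((-1:ℝ) = 1)), if_pos rfl]; ring
    · rw [if_pos rfl, if_neg (by norm_num : ¬((1:ℝ) = -1))]; ring
  rw [e 1 (Or.inr rfl), e (-1) (Or.inl rfl), ← mul_sub, ← Finset.sum_sub_distrib]
  have key : |∑ y ∈ cube n, (QQ b S k z y * h (Function.update y k 1)
      - QQ b S k z y * h (Function.update y k (-1)))| ≤ 2 * (2 * L) := by
    calc |∑ y ∈ cube n, (QQ b S k z y * h (Function.update y k 1)
        - QQ b S k z y * h (Function.update y k (-1)))|
        ≤ ∑ y ∈ cube n, |QQ b S k z y * (h (Function.update y k 1)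
            - h (Function.update y k (-1)))| := by
          refine le_trans (Finset.abs_sum_le_sum_abs _ _) (le_of_eq ?_)
          exact Finset.sum_congr rfl fun y _ => by rw [mul_sub]
      _ ≤ ∑ y ∈ cube n, QQ b S k z y * (2 * L) := by
          refine Finset.sum_le_sum fun y hy => ?_
          rw [abs_mul, abs_of_nonneg (QQ_nonneg b hb0 S k z y)]
          exact mul_le_mul_of_nonneg_left (hLip y hy k) (QQ_nonneg b hb0 S k z y)
      _ = 2 * (2 * L) := by rw [← Finset.sum_mul, QQ_mass b hb1 S k z hz]
  calc |1/2 * ∑ y ∈ cube n, (QQ b S k z y * h (Function.update y k 1)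
      - QQ b S k z y * h (Function.update y k (-1)))|
      = (1/2) * |∑ y ∈ cube n, (QQ b S k z y * h (Function.update y k 1)
          - QQ b S k z y * h (Function.update y k (-1)))| := by
        rw [abs_mul]; norm_num
    _ ≤ (1/2) * (2 * (2 * L)) := by
        have := key
        linarith [abs_nonneg (∑ y ∈ cube n, (QQ b S k z y * h (Function.update y k 1)
          - QQ b S k z y * h (Function.update y k (-1))))]
    _ = 2 * L := by ring


section Tele
variable (b : Fin n → ℝ → ℝ) (h ν : (Fin n → ℝ) → ℝ) (t : Fin n → (Fin n → ℝ) → ℝ)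
  (m : Fin n → ℝ) (L : ℝ)

def EE (S : Finset (Fin n)) : ℝ := ∑ z ∈ cube n, ν z * HH b h S z

lemma EE_step
    (hb0 : ∀ i a, 0 ≤ b i a) (hb1 : ∀ i, b i 1 + b i (-1) = 1)
    (hbm : ∀ i, b i 1 - b i (-1) = m i)
    (hν0 : ∀ z ∈ cube n, 0 ≤ ν z)
    (hpair : ∀ k : Fin n, ∀ z ∈ cube n,
      ν (Function.update z k 1) - ν (Function.update z k (-1))
        = (ν (Function.update z k 1) + ν (Function.update z k (-1))) * t k z)
    (ht_inv : ∀ (k : Fin n) (a : ℝ) (z : Fin n → ℝ), t k (Function.update z k a) = t k z)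
    (hLip : ∀ y ∈ cube n,
      ∀ k : Fin n, |h (Function.update y k 1) - h (Function.update y k (-1))| ≤ 2 * L)
    (hL : 0 ≤ L)
    (S : Finset (Fin n)) (k : Fin n) (hk : k ∉ S) :
    |EE b h ν (insert k S) - EE b h ν S| ≤ L * ∑ z ∈ cube n, ν z * |t k z - m k| := by
  have key : EE b h ν (insert k S) - EE b h ν S
      = (1/2) * ∑ z ∈ cube n,
        ((ν (Function.update z k 1) + ν (Function.update z k (-1))) * (m k - t k z)/2
          * (HH b h S (Function.update z k 1) - HH b h S (Function.update z k (-1)))) := by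
    have e1 : EE b h ν (insert k S) = ∑ z ∈ cube n,
        ν z * (b k 1 * HH b h S (Function.update z k 1)
          + b k (-1) * HH b h S (Function.update z k (-1))) :=
      Finset.sum_congr rfl fun z _ => by rw [HH_insert b h S k hk z]
    unfold EE at *
    rw [e1,
      sum_cube_split k (fun z => ν z * (b k 1 * HH b h S (Function.update z k 1)
        + b k (-1) * HH b h S (Function.update z k (-1)))),
      sum_cube_split k (fun z => ν z * HH b h S z), ← mul_sub, ← Finset.sum_sub_distrib]
    congr 1
    refine Finset.sum_congr rfl fun z hz => ?_
    simp only [Function.update_idem]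
    have hp := hpair k z hz
    have e2 : b k 1 = (1 + m k)/2 := by linarith [hb1 k, hbm k]
    have e3 : b k (-1) = (1 - m k)/2 := by linarith [hb1 k, hbm k]
    rw [e2, e3]
    linear_combination ((HH b h S (Function.update z k (-1))
      - HH b h S (Function.update z k 1))/2) * hp
  have back : ∑ z ∈ cube n, ν z * |t k z - m k|
      = (1/2) * ∑ z ∈ cube n, ((ν (Function.update z k 1) + ν (Function.update z k (-1)))
          * |t k z - m k|) := by
    rw [sum_cube_split k (fun z => ν z * |t k z - m k|)]
    congr 1
    refine Finset.sum_congr rfl fun z _ => ?_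
    rw [ht_inv, ht_inv]
    ring
  rw [key, back]
  have hpt : ∀ z ∈ cube n,
      |(ν (Function.update z k 1) + ν (Function.update z k (-1))) * (m k - t k z)/2
        * (HH b h S (Function.update z k 1) - HH b h S (Function.update z k (-1)))|
      ≤ ((ν (Function.update z k 1) + ν (Function.update z k (-1))) * |t k z - m k|) * L := by
    intro z hz
    have hs0 : 0 ≤ ν (Function.update z k 1) + ν (Function.update z k (-1)) :=
      add_nonneg (hν0 _ (update_mem_cube hz k (Or.inr rfl)))
        (hν0 _ (update_mem_cube hz k (Or.inl rfl)))
    have hH := HH_flip_diff b h L hb0 hb1 (fun y hy k => hLip y hy k) S k hk z hz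
    have e4 : |(ν (Function.update z k 1) + ν (Function.update z k (-1))) * (m k - t k z)/2|
        = (ν (Function.update z k 1) + ν (Function.update z k (-1))) * |t k z - m k|/2 := by
      rw [abs_div, abs_mul, abs_of_nonneg hs0, abs_sub_comm]
      norm_num
    rw [abs_mul, e4]
    calc (ν (Function.update z k 1) + ν (Function.update z k (-1))) * |t k z - m k|/2
          * |HH b h S (Function.update z k 1) - HH b h S (Function.update z k (-1))|
        ≤ (ν (Function.update z k 1) + ν (Function.update z k (-1))) * |t k z - m k|/2
          * (2 * L) := by
          refine mul_le_mul_of_nonneg_left hH (by positivity)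
      _ = ((ν (Function.update z k 1) + ν (Function.update z k (-1))) * |t k z - m k|) * L := by
          ring
  calc |(1/2) * ∑ z ∈ cube n,
        ((ν (Function.update z k 1) + ν (Function.update z k (-1))) * (m k - t k z)/2
          * (HH b h S (Function.update z k 1) - HH b h S (Function.update z k (-1))))|
      ≤ (1/2) * ∑ z ∈ cube n,
        (((ν (Function.update z k 1) + ν (Function.update z k (-1))) * |t k z - m k|) * L) := by
        rw [abs_mul, abs_of_nonneg (by norm_num : (0:ℝ) ≤ 1/2)]
        refine mul_le_mul_of_nonneg_left ?_ (by norm_num)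
        exact le_trans (Finset.abs_sum_le_sum_abs _ _) (Finset.sum_le_sum hpt)
    _ = L * ((1/2) * ∑ z ∈ cube n,
        ((ν (Function.update z k 1) + ν (Function.update z k (-1))) * |t k z - m k|)) := by
        rw [← Finset.sum_mul]
        ring

lemma HH_empty (z : Fin n → ℝ) (hz : z ∈ cube n) : HH b h ∅ z = h z := by
  unfold HH
  rw [Finset.sum_eq_single_of_mem z hz]
  · have : PP b ∅ z z = 1 := by
      unfold PP
      refine Finset.prod_eq_one fun i _ => ?_
      simp
    rw [this, one_mul]
  · intro y _ hyz
    obtain ⟨i, hi⟩ := Function.ne_iff.1 hyz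
    have : PP b ∅ z y = 0 := by
      unfold PP
      refine Finset.prod_eq_zero (Finset.mem_univ i) ?_
      rw [if_neg (Finset.notMem_empty i), if_neg (fun hc => hi hc.symm)]
    rw [this, zero_mul]

lemma EE_empty : EE b h ν ∅ = ∑ z ∈ cube n, ν z * h z :=
  Finset.sum_congr rfl fun z hz => by rw [HH_empty b h z hz]

lemma EE_univ (hν1 : ∑ z ∈ cube n, ν z = 1) :
    EE b h ν Finset.univ = ∑ y ∈ cube n, (∏ i, b i (y i)) * h y := by
  have hHH : ∀ z, HH b h Finset.univ z = ∑ y ∈ cube n, (∏ i, b i (y i)) * h y := by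
    intro z
    unfold HH PP
    refine Finset.sum_congr rfl fun y _ => ?_
    congr 1
    exact Finset.prod_congr rfl fun i _ => if_pos (Finset.mem_univ i)
  unfold EE
  rw [Finset.sum_congr rfl fun z _ => by rw [hHH z], ← Finset.sum_mul, hν1, one_mul]

lemma telescope
    (hb0 : ∀ i a, 0 ≤ b i a) (hb1 : ∀ i, b i 1 + b i (-1) = 1)
    (hbm : ∀ i, b i 1 - b i (-1) = m i)
    (hν0 : ∀ z ∈ cube n, 0 ≤ ν z) (hν1 : ∑ z ∈ cube n, ν z = 1)
    (hpair : ∀ k : Fin n, ∀ z ∈ cube n,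
      ν (Function.update z k 1) - ν (Function.update z k (-1))
        = (ν (Function.update z k 1) + ν (Function.update z k (-1))) * t k z)
    (ht_inv : ∀ (k : Fin n) (a : ℝ) (z : Fin n → ℝ), t k (Function.update z k a) = t k z)
    (hLip : ∀ y ∈ cube n,
      ∀ k : Fin n, |h (Function.update y k 1) - h (Function.update y k (-1))| ≤ 2 * L)
    (hL : 0 ≤ L) :
    |∑ y ∈ cube n, (∏ i, b i (y i)) * h y - ∑ z ∈ cube n, ν z * h z|
      ≤ L * ∑ k : Fin n, ∑ z ∈ cube n, ν z * |t k z - m k| := by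
  have main : ∀ S : Finset (Fin n), |EE b h ν S - EE b h ν ∅|
      ≤ L * ∑ k ∈ S, ∑ z ∈ cube n, ν z * |t k z - m k| := by
    intro S
    induction S using Finset.induction_on with
    | empty => simp
    | @insert a s ha ih =>
      calc |EE b h ν (insert a s) - EE b h ν ∅|
          ≤ |EE b h ν (insert a s) - EE b h ν s| + |EE b h ν s - EE b h ν ∅| :=
            abs_sub_le _ _ _
        _ ≤ L * ∑ z ∈ cube n, ν z * |t a z - m a|
            + L * ∑ k ∈ s, ∑ z ∈ cube n, ν z * |t k z - m k| :=
            add_le_add (EE_step b h ν t m L hb0 hb1 hbm hν0 hpair ht_inv hLip hL s a ha) ih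
        _ = L * ∑ k ∈ insert a s, ∑ z ∈ cube n, ν z * |t k z - m k| := by
            rw [Finset.sum_insert ha, mul_add]
  have := main Finset.univ
  rwa [EE_univ b h ν hν1, EE_empty b h ν] at this

end Tele


section Nu
variable (f θ : (Fin n → ℝ) → ℝ)

def FF (f : (Fin n → ℝ) → ℝ) (θ : Fin n → ℝ) (y : Fin n → ℝ) : ℝ := f y + ∑ i, θ i * y i
def ZZ (f : (Fin n → ℝ) → ℝ) (θ : Fin n → ℝ) : ℝ := ∑ z ∈ cube n, Real.exp (FF f θ z)

lemma ZZ_pos (f : (Fin n → ℝ) → ℝ) (θ : Fin n → ℝ) : 0 < ZZ f θ :=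
  Finset.sum_pos (fun z _ => Real.exp_pos _) cube_nonempty

lemma nu_eq (f : (Fin n → ℝ) → ℝ) (θ : Fin n → ℝ) :
    ∀ y ∈ cube n, tilt (gibbs f) θ y = Real.exp (FF f θ y) / ZZ f θ := by
  intro y hy
  have hZ1 : (0:ℝ) < ∑ z ∈ cube n, Real.exp (f z) :=
    Finset.sum_pos (fun z _ => Real.exp_pos _) cube_nonempty
  have hden : ∑ z ∈ cube n, gibbs f z * Real.exp (∑ i, θ i * z i)
      = ZZ f θ / ∑ z ∈ cube n, Real.exp (f z) := by
    rw [eq_div_iff hZ1.ne', Finset.sum_mul]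
    unfold ZZ
    refine Finset.sum_congr rfl fun z hz => ?_
    unfold gibbs FF
    rw [if_pos hz, Real.exp_add]
    field_simp
  unfold tilt
  rw [hden]
  unfold gibbs FF
  rw [if_pos hy, Real.exp_add]
  have hZ : 0 < ZZ f θ := ZZ_pos f θ
  field_simp

lemma nu_pos (f : (Fin n → ℝ) → ℝ) (θ : Fin n → ℝ) :
    ∀ y ∈ cube n, 0 < tilt (gibbs f) θ y := by
  intro y hy
  rw [nu_eq f θ y hy]
  exact div_pos (Real.exp_pos _) (ZZ_pos f θ)

lemma nu_sum (f : (Fin n → ℝ) → ℝ) (θ : Fin n → ℝ) :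
    ∑ y ∈ cube n, tilt (gibbs f) θ y = 1 := by
  rw [Finset.sum_congr rfl (nu_eq f θ), ← Finset.sum_div]
  exact div_self (ZZ_pos f θ).ne'

lemma ham_eq (f : (Fin n → ℝ) → ℝ) (θ : Fin n → ℝ) :
    ∀ y ∈ cube n, hamOf (tilt (gibbs f) θ) y
      = Real.log (2 ^ n) + FF f θ y - Real.log (ZZ f θ) := by
  intro y hy
  unfold hamOf
  rw [nu_eq f θ y hy,
    Real.log_mul (by positivity) (div_pos (Real.exp_pos _) (ZZ_pos f θ)).ne',
    Real.log_div (Real.exp_ne_zero _) (ZZ_pos f θ).ne', Real.log_exp]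
  ring

lemma sum_theta_update (θ y : Fin n → ℝ) (k : Fin n) (a : ℝ) :
    ∑ i, θ i * (Function.update y k a i)
      = θ k * a + ∑ i ∈ Finset.univ.erase k, θ i * y i := by
  rw [← Finset.add_sum_erase _ _ (Finset.mem_univ k), Function.update_self]
  congr 1
  exact Finset.sum_congr rfl fun i hi => by
    rw [Function.update_of_ne (Finset.ne_of_mem_erase hi)]

lemma dd_ham (f : (Fin n → ℝ) → ℝ) (θ : Fin n → ℝ) (k : Fin n) :
    ∀ y ∈ cube n, dd (hamOf (tilt (gibbs f) θ)) k y
      = (FF f θ (Function.update y k 1) - FF f θ (Function.update y k (-1))) / 2 := by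
  intro y hy
  unfold dd
  rw [ham_eq f θ _ (update_mem_cube hy k (Or.inr rfl)),
    ham_eq f θ _ (update_mem_cube hy k (Or.inl rfl))]
  ring

lemma dd_hamOf (f : (Fin n → ℝ) → ℝ) (θ : Fin n → ℝ) (k : Fin n) :
    ∀ y ∈ cube n, dd (hamOf (tilt (gibbs f) θ)) k y = dd f k y + θ k := by
  intro y hy
  rw [dd_ham f θ k y hy]
  unfold FF dd
  rw [sum_theta_update, sum_theta_update]
  ring

lemma nu_pair (f : (Fin n → ℝ) → ℝ) (θ : Fin n → ℝ) (k : Fin n) :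
    ∀ y ∈ cube n,
      tilt (gibbs f) θ (Function.update y k 1) - tilt (gibbs f) θ (Function.update y k (-1))
        = (tilt (gibbs f) θ (Function.update y k 1)
            + tilt (gibbs f) θ (Function.update y k (-1)))
          * Real.tanh (dd (hamOf (tilt (gibbs f) θ)) k y) := by
  intro y hy
  rw [dd_ham f θ k y hy, tanh_half_sub,
    nu_eq f θ _ (update_mem_cube hy k (Or.inr rfl)),
    nu_eq f θ _ (update_mem_cube hy k (Or.inl rfl))]
  have h1 := Real.exp_pos (FF f θ (Function.update y k 1))
  have h2 := Real.exp_pos (FF f θ (Function.update y k (-1)))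
  have h3 := ZZ_pos f θ
  field_simp

end Nu

end Aux

set_option maxHeartbeats 2000000 in
/-- Proposition `part_one` of the paper.
With `ν` the Gibbs distribution of `f` and `θ` a tilt with `‖θ‖₂ ≤ ε√n`,
`‖θ‖_∞ ≤ 1/4` and small `Tr(H(τ_θν))`, if `Y ∼ ξ_θ` (the product measure whose
center of mass is `∫ tanh(∇f_{τ_θν}) dτ_θν`), then
`E‖tanh(∇f(Y)) - E Y‖₁ ≤ 64 L₂ n^{2/3} D^{1/3}/ε^{1/3} + εn`. -/
theorem part_one (n : ℕ) (f : (Fin n → ℝ) → ℝ)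
    (D L₂ ε : ℝ)
    (hD : D = gradComplexity f)
    (hL₂ : L₂ = max 1 (gradLip f))
    (hε : 0 < ε)
    (θ : Fin n → ℝ)
    (hθ2 : tnorm θ ≤ ε * Real.sqrt n)
    (hθinf : ∀ i, |θ i| ≤ 1 / 4)
    (hH : traceH (tilt (gibbs f) θ) ≤
      256 * (n : ℝ) ^ ((1 : ℝ) / 3) * D ^ ((2 : ℝ) / 3) / ε ^ ((2 : ℝ) / 3))
    (EY : Fin n → ℝ)
    (hEY : EY = fun i => ∑ y ∈ cube n,
      tilt (gibbs f) θ y * Real.tanh (dd (hamOf (tilt (gibbs f) θ)) i y))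
    (ξ : (Fin n → ℝ) → ℝ)
    (hξ : IsProduct ξ)
    (hξmean : ∀ i, ∑ y ∈ cube n, ξ y * y i = EY i) :
    ∑ y ∈ cube n, ξ y * onorm (fun i => Real.tanh (dd f i y) - EY i) ≤
      64 * L₂ * (n : ℝ) ^ ((2 : ℝ) / 3) * D ^ ((1 : ℝ) / 3) / ε ^ ((1 : ℝ) / 3) + ε * n := by
  classical
  obtain ⟨hξout, q, hq, hξq⟩ := hξ
  -- the Bernoulli weights of the product measure ξ
  set b : Fin n → ℝ → ℝ := fun i a => if a = 1 then q i else 1 - q i with hbdef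
  -- the tilted Gibbs measure and the conditional-mean function
  set t : Fin n → (Fin n → ℝ) → ℝ :=
    fun k y => Real.tanh (dd (hamOf (tilt (gibbs f) θ)) k y) with htdef
  set hh : (Fin n → ℝ) → ℝ := fun y => ∑ k, |t k y - EY k| with hhhdef
  set A : ℝ := ∑ k : Fin n, ∑ z ∈ cube n, tilt (gibbs f) θ z * |t k z - EY k| with hAdef
  have hL₂1 : 1 ≤ L₂ := by rw [hL₂]; exact le_max_left _ _
  have hL₂0 : (0:ℝ) ≤ L₂ := by linarith
  have hn0 : (0:ℝ) ≤ (n:ℝ) := Nat.cast_nonneg n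
  -- facts about b
  have hb0 : ∀ i a, 0 ≤ b i a := by
    intro i a
    rw [hbdef]
    dsimp only
    split
    · exact (hq i).1
    · linarith [(hq i).2]
  have hb1 : ∀ i, b i 1 + b i (-1) = 1 := by
    intro i
    rw [hbdef]
    dsimp only
    rw [if_pos rfl, if_neg (by norm_num : ¬((-1:ℝ) = 1))]
    ring
  have hξprod : ∀ y ∈ cube n, ξ y = ∏ i, b i (y i) := fun y hy => hξq y hy
  have hξ0 : ∀ y ∈ cube n, 0 ≤ ξ y := fun y hy => by
    rw [hξprod y hy]; exact Finset.prod_nonneg fun i _ => hb0 i (y i)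
  have hξsum : ∑ y ∈ cube n, ξ y = 1 := by
    rw [Finset.sum_congr rfl hξprod]
    have hs := sum_cube_prod (n := n) (fun i a => b i a)
    rw [hs]
    refine Finset.prod_eq_one fun i _ => ?_
    rw [add_comm]
    exact hb1 i
  have hbm : ∀ k, b k 1 - b k (-1) = EY k := by
    intro k
    have hsplit : ∀ y : Fin n → ℝ,
        (∏ i, b i (y i)) * y k = ∏ i, (if i = k then b i (y i) * y i else b i (y i)) := by
      intro y
      rw [← Finset.mul_prod_erase _ (fun i => if i = k then b i (y i) * y i else b i (y i))
          (Finset.mem_univ k), if_pos rfl,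
        ← Finset.mul_prod_erase _ (fun i => b i (y i)) (Finset.mem_univ k)]
      have he : ∏ i ∈ Finset.univ.erase k, (if i = k then b i (y i) * y i else b i (y i))
          = ∏ i ∈ Finset.univ.erase k, b i (y i) :=
        Finset.prod_congr rfl fun i hi => if_neg (Finset.ne_of_mem_erase hi)
      rw [he]
      ring
    have hcomp : ∑ y ∈ cube n, ξ y * y k = b k 1 - b k (-1) := by
      rw [Finset.sum_congr rfl (fun y hy => by rw [hξprod y hy, hsplit y])]
      have hs := sum_cube_prod (n := n) (fun i a => if i = k then b i a * a else b i a)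
      rw [hs, Finset.prod_eq_single k ?hh1 ?hh2]
      · rw [if_pos rfl, if_pos rfl]
        ring
      case hh1 =>
        intro i _ hik
        rw [if_neg hik, if_neg hik, add_comm]
        exact hb1 i
      case hh2 => intro hcon; exact absurd (Finset.mem_univ k) hcon
    rw [← hcomp]
    exact hξmean k
  -- facts about the tilted measure
  have hν0 : ∀ z ∈ cube n, 0 ≤ tilt (gibbs f) θ z := fun z hz => (nu_pos f θ z hz).le
  have hν1 : ∑ z ∈ cube n, tilt (gibbs f) θ z = 1 := nu_sum f θ
  have hpair : ∀ k : Fin n, ∀ z ∈ cube n,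
      tilt (gibbs f) θ (Function.update z k 1) - tilt (gibbs f) θ (Function.update z k (-1))
        = (tilt (gibbs f) θ (Function.update z k 1)
            + tilt (gibbs f) θ (Function.update z k (-1))) * t k z :=
    fun k z hz => nu_pair f θ k z hz
  have ht_inv : ∀ (k : Fin n) (a : ℝ) (z : Fin n → ℝ), t k (Function.update z k a) = t k z := by
    intro k a z
    rw [htdef]
    dsimp only
    unfold dd
    rw [Function.update_idem, Function.update_idem]
  -- Lipschitz property of hh
  have hLip : ∀ y ∈ cube n, ∀ k : Fin n,
      |hh (Function.update y k 1) - hh (Function.update y k (-1))| ≤ 2 * L₂ := by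
    intro y hy k
    have hy1 : Function.update y k 1 ∈ cube n := update_mem_cube hy k (Or.inr rfl)
    have hy2 : Function.update y k (-1) ∈ cube n := update_mem_cube hy k (Or.inl rfl)
    have step1 : |hh (Function.update y k 1) - hh (Function.update y k (-1))|
        ≤ onorm (dgrad f (Function.update y k 1) - dgrad f (Function.update y k (-1))) := by
      rw [hhhdef]
      dsimp only
      rw [← Finset.sum_sub_distrib]
      refine le_trans (Finset.abs_sum_le_sum_abs _ _) ?_
      unfold onorm
      refine Finset.sum_le_sum fun j _ => ?_
      have h1 : |(|t j (Function.update y k 1) - EY j| - |t j (Function.update y k (-1)) - EY j|)|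
          ≤ |t j (Function.update y k 1) - t j (Function.update y k (-1))| := by
        have := abs_abs_sub_abs_le_abs_sub (t j (Function.update y k 1) - EY j)
          (t j (Function.update y k (-1)) - EY j)
        have he : (t j (Function.update y k 1) - EY j)
            - (t j (Function.update y k (-1)) - EY j)
            = t j (Function.update y k 1) - t j (Function.update y k (-1)) := by ring
        rwa [he] at this
      refine le_trans h1 ?_
      have h2 : |t j (Function.update y k 1) - t j (Function.update y k (-1))|
          ≤ |dd (hamOf (tilt (gibbs f) θ)) j (Function.update y k 1)
              - dd (hamOf (tilt (gibbs f) θ)) j (Function.update y k (-1))| := by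
        rw [htdef]
        exact abs_tanh_sub_tanh _ _
      refine le_trans h2 ?_
      rw [dd_hamOf f θ j _ hy1, dd_hamOf f θ j _ hy2]
      have he2 : dd f j (Function.update y k 1) + θ j
          - (dd f j (Function.update y k (-1)) + θ j)
          = (dgrad f (Function.update y k 1) - dgrad f (Function.update y k (-1))) j := by
        simp only [Pi.sub_apply]
        unfold dgrad
        ring
      rw [he2]
    refine le_trans step1 ?_
    -- use the gradient-Lipschitz constant
    have hne : Function.update y k 1 ≠ Function.update y k (-1) := by
      intro hcontra
      have := congrFun hcontra k
      rw [Function.update_self, Function.update_self] at this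
      norm_num at this
    have honorm2 : onorm (Function.update y k 1 - Function.update y k (-1)) = 2 := by
      unfold onorm
      rw [Finset.sum_eq_single k ?hs1 ?hs2]
      · simp only [Pi.sub_apply, Function.update_self]
        norm_num
      case hs1 =>
        intro j _ hjk
        simp only [Pi.sub_apply, Function.update_of_ne hjk]
        simp
      case hs2 => intro hcon; exact absurd (Finset.mem_univ k) hcon
    have hbddS : BddAbove {a | ∃ x ∈ cube n, ∃ y ∈ cube n, x ≠ y ∧
        a = onorm (dgrad f x - dgrad f y) / onorm (x - y)} := by
      have hsub : {a | ∃ x ∈ cube n, ∃ y ∈ cube n, x ≠ y ∧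
          a = onorm (dgrad f x - dgrad f y) / onorm (x - y)}
          ⊆ (fun p : (Fin n → ℝ) × (Fin n → ℝ) =>
              onorm (dgrad f p.1 - dgrad f p.2) / onorm (p.1 - p.2)) ''
            ((cube n : Set (Fin n → ℝ)) ×ˢ (cube n : Set (Fin n → ℝ))) := by
        rintro a ⟨x, hx, y', hy', _, rfl⟩
        exact ⟨(x, y'), ⟨hx, hy'⟩, rfl⟩
      exact BddAbove.mono hsub
        (Set.Finite.bddAbove (Set.Finite.image _
          (Set.Finite.prod (cube n).finite_toSet (cube n).finite_toSet)))
    have hmemS : onorm (dgrad f (Function.update y k 1) - dgrad f (Function.update y k (-1)))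
        / onorm (Function.update y k 1 - Function.update y k (-1))
        ∈ {a | ∃ x ∈ cube n, ∃ y ∈ cube n, x ≠ y ∧
          a = onorm (dgrad f x - dgrad f y) / onorm (x - y)} :=
      ⟨Function.update y k 1, hy1, Function.update y k (-1), hy2, hne, rfl⟩
    have hle : onorm (dgrad f (Function.update y k 1) - dgrad f (Function.update y k (-1)))
        / onorm (Function.update y k 1 - Function.update y k (-1)) ≤ gradLip f := by
      unfold gradLip
      exact le_csSup hbddS hmemS
    have hgl : gradLip f ≤ L₂ := by rw [hL₂]; exact le_max_right _ _
    calc onorm (dgrad f (Function.update y k 1) - dgrad f (Function.update y k (-1)))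
        = (onorm (dgrad f (Function.update y k 1) - dgrad f (Function.update y k (-1)))
            / onorm (Function.update y k 1 - Function.update y k (-1))) * 2 := by
          rw [honorm2]; ring
      _ ≤ L₂ * 2 := by
          refine mul_le_mul_of_nonneg_right (le_trans hle hgl) (by norm_num)
      _ = 2 * L₂ := by ring
  -- the telescoping (transport) estimate
  have htel := telescope b hh (tilt (gibbs f) θ) t EY L₂ hb0 hb1 hbm hν0 hν1 hpair ht_inv
    hLip hL₂0
  -- ℓ¹ norm of θ
  have hθ1 : ∑ i, |θ i| ≤ ε * n := by
    have hcs := Finset.sum_mul_sq_le_sq_mul_sq Finset.univ (fun _ : Fin n => (1:ℝ))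
      (fun i => |θ i|)
    simp only [one_pow, one_mul, sq_abs, Finset.sum_const, Finset.card_univ,
      Fintype.card_fin, nsmul_eq_mul, mul_one] at hcs
    have h2 : ∑ i, |θ i| ≤ Real.sqrt ((n:ℝ) * ∑ i, (θ i)^2) := by
      rw [← Real.sqrt_sq (Finset.sum_nonneg fun i _ => abs_nonneg (θ i))]
      exact Real.sqrt_le_sqrt hcs
    have h3 : Real.sqrt ((n:ℝ) * ∑ i, (θ i)^2) = Real.sqrt (n:ℝ) * tnorm θ := by
      rw [Real.sqrt_mul hn0]
      rfl
    have h4 : Real.sqrt (n:ℝ) * tnorm θ ≤ Real.sqrt (n:ℝ) * (ε * Real.sqrt (n:ℝ)) :=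
      mul_le_mul_of_nonneg_left hθ2 (Real.sqrt_nonneg _)
    have h5 : Real.sqrt (n:ℝ) * (ε * Real.sqrt (n:ℝ)) = ε * n := by
      rw [show Real.sqrt (n:ℝ) * (ε * Real.sqrt (n:ℝ))
          = ε * (Real.sqrt (n:ℝ) * Real.sqrt (n:ℝ)) from by ring, Real.mul_self_sqrt hn0]
    linarith
  -- D is nonnegative
  have hD0 : (0:ℝ) ≤ D := by
    rw [hD]
    unfold gradComplexity gaussianWidth
    refine MeasureTheory.integral_nonneg fun w => ?_
    have hKfin : ((dgrad f '' (cube n : Set (Fin n → ℝ))) ∪ {0}).Finite :=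
      Set.Finite.union (Set.Finite.image _ (cube n).finite_toSet) (Set.finite_singleton _)
    have hmem0 : (0:ℝ) ∈ (fun v => ∑ i, v i * w i) ''
        ((dgrad f '' (cube n : Set (Fin n → ℝ))) ∪ {0}) :=
      ⟨0, Or.inr rfl, by simp⟩
    exact le_csSup (Set.Finite.bddAbove (Set.Finite.image _ hKfin)) hmem0
  have hA0 : (0:ℝ) ≤ A := by
    rw [hAdef]
    refine Finset.sum_nonneg fun k _ => Finset.sum_nonneg fun z hz => ?_
    exact mul_nonneg (hν0 z hz) (abs_nonneg _)
  -- variance bound: A² ≤ n · Tr H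
  have hAsq : A^2 ≤ (n:ℝ) * traceH (tilt (gibbs f) θ) := by
    have hak : ∀ k : Fin n, (∑ z ∈ cube n, tilt (gibbs f) θ z * |t k z - EY k|)^2
        ≤ ∑ z ∈ cube n, tilt (gibbs f) θ z * (t k z - EY k)^2 := by
      intro k
      have hcs := Finset.sum_mul_sq_le_sq_mul_sq (cube n)
        (fun z => Real.sqrt (tilt (gibbs f) θ z))
        (fun z => Real.sqrt (tilt (gibbs f) θ z) * |t k z - EY k|)
      have e1 : ∑ z ∈ cube n, Real.sqrt (tilt (gibbs f) θ z)
          * (Real.sqrt (tilt (gibbs f) θ z) * |t k z - EY k|)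
          = ∑ z ∈ cube n, tilt (gibbs f) θ z * |t k z - EY k| :=
        Finset.sum_congr rfl fun z hz => by
          rw [← mul_assoc, Real.mul_self_sqrt (hν0 z hz)]
      have e2 : ∑ z ∈ cube n, (Real.sqrt (tilt (gibbs f) θ z))^2
          = ∑ z ∈ cube n, tilt (gibbs f) θ z :=
        Finset.sum_congr rfl fun z hz => Real.sq_sqrt (hν0 z hz)
      have e3 : ∑ z ∈ cube n, (Real.sqrt (tilt (gibbs f) θ z) * |t k z - EY k|)^2
          = ∑ z ∈ cube n, tilt (gibbs f) θ z * (t k z - EY k)^2 :=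
        Finset.sum_congr rfl fun z hz => by
          rw [mul_pow, Real.sq_sqrt (hν0 z hz), sq_abs]
      rw [e1, e2, e3, hν1, one_mul] at hcs
      exact hcs
    have hcs2 := Finset.sum_mul_sq_le_sq_mul_sq Finset.univ (fun _ : Fin n => (1:ℝ))
      (fun k => ∑ z ∈ cube n, tilt (gibbs f) θ z * |t k z - EY k|)
    simp only [one_pow, one_mul, Finset.sum_const, Finset.card_univ,
      Fintype.card_fin, nsmul_eq_mul, mul_one] at hcs2
    have hTr : ∑ k : Fin n, ∑ z ∈ cube n, tilt (gibbs f) θ z * (t k z - EY k)^2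
        = traceH (tilt (gibbs f) θ) := by
      unfold traceH
      refine Finset.sum_congr rfl fun k _ => ?_
      have hm : EY k = ∑ z ∈ cube n,
          tilt (gibbs f) θ z * Real.tanh (dd (hamOf (tilt (gibbs f) θ)) k z) := by
        rw [hEY]
      calc ∑ z ∈ cube n, tilt (gibbs f) θ z * (t k z - EY k)^2
          = ∑ z ∈ cube n, (tilt (gibbs f) θ z * (t k z)^2
              - 2 * EY k * (tilt (gibbs f) θ z * t k z)
              + (EY k)^2 * tilt (gibbs f) θ z) :=
            Finset.sum_congr rfl fun z _ => by ring
        _ = (∑ z ∈ cube n, tilt (gibbs f) θ z * (t k z)^2)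
            - 2 * EY k * (∑ z ∈ cube n, tilt (gibbs f) θ z * t k z)
            + (EY k)^2 * (∑ z ∈ cube n, tilt (gibbs f) θ z) := by
            rw [Finset.sum_add_distrib, Finset.sum_sub_distrib, ← Finset.mul_sum,
              ← Finset.mul_sum]
        _ = (∑ z ∈ cube n, tilt (gibbs f) θ z * (t k z)^2)
            - (∑ z ∈ cube n, tilt (gibbs f) θ z * t k z)^2 := by
            rw [hν1, ← hm]
            ring
        _ = (∑ z ∈ cube n, tilt (gibbs f) θ z * (Real.tanh (dd (hamOf (tilt (gibbs f) θ)) k z))^2)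
            - (∑ z ∈ cube n, tilt (gibbs f) θ z
                * Real.tanh (dd (hamOf (tilt (gibbs f) θ)) k z))^2 := by
            rw [htdef]
    calc A^2 ≤ (n:ℝ) * ∑ k : Fin n,
        (∑ z ∈ cube n, tilt (gibbs f) θ z * |t k z - EY k|)^2 := by
          rw [hAdef]; exact hcs2
      _ ≤ (n:ℝ) * ∑ k : Fin n, ∑ z ∈ cube n, tilt (gibbs f) θ z * (t k z - EY k)^2 :=
          mul_le_mul_of_nonneg_left (Finset.sum_le_sum fun k _ => hak k) hn0
      _ = (n:ℝ) * traceH (tilt (gibbs f) θ) := by rw [hTr]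
  -- the quantitative bound A ≤ B
  have he13 : (0:ℝ) < ε ^ ((1:ℝ)/3) := Real.rpow_pos_of_pos hε _
  have hsq1 : ((n:ℝ) ^ ((2:ℝ)/3))^2 = (n:ℝ) * (n:ℝ) ^ ((1:ℝ)/3) := by
    rw [← Real.rpow_natCast ((n:ℝ) ^ ((2:ℝ)/3)) 2, ← Real.rpow_mul hn0]
    rw [show ((2:ℝ)/3 * ((2:ℕ):ℝ)) = 1 + (1:ℝ)/3 by push_cast; norm_num]
    rw [Real.rpow_add' hn0 (by norm_num), Real.rpow_one]
  have hsq2 : (D ^ ((1:ℝ)/3))^2 = D ^ ((2:ℝ)/3) := by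
    rw [← Real.rpow_natCast (D ^ ((1:ℝ)/3)) 2, ← Real.rpow_mul hD0]
    norm_num
  have hsq3 : (ε ^ ((1:ℝ)/3))^2 = ε ^ ((2:ℝ)/3) := by
    rw [← Real.rpow_natCast (ε ^ ((1:ℝ)/3)) 2, ← Real.rpow_mul hε.le]
    norm_num
  set B : ℝ := 16 * (n:ℝ) ^ ((2:ℝ)/3) * D ^ ((1:ℝ)/3) / ε ^ ((1:ℝ)/3) with hBdef
  have hB0 : (0:ℝ) ≤ B := by
    rw [hBdef]
    exact div_nonneg (mul_nonneg (mul_nonneg (by norm_num)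
      (Real.rpow_nonneg hn0 _)) (Real.rpow_nonneg hD0 _)) he13.le
  have hBsq : B^2 = (n:ℝ) * (256 * (n : ℝ) ^ ((1 : ℝ) / 3) * D ^ ((2 : ℝ) / 3)
      / ε ^ ((2 : ℝ) / 3)) := by
    rw [hBdef, div_pow, mul_pow, mul_pow, hsq1, hsq2, hsq3]
    ring
  have hAB : A ≤ B := by
    have h1 : A^2 ≤ B^2 := by
      rw [hBsq]
      exact le_trans hAsq (mul_le_mul_of_nonneg_left hH hn0)
    have h2 := Real.sqrt_le_sqrt h1
    rwa [Real.sqrt_sq hA0, Real.sqrt_sq hB0] at h2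
  -- pointwise comparison on the cube
  have hpoint : ∀ y ∈ cube n,
      ξ y * onorm (fun i => Real.tanh (dd f i y) - EY i) ≤ ξ y * (hh y + ∑ i, |θ i|) := by
    intro y hy
    refine mul_le_mul_of_nonneg_left ?_ (hξ0 y hy)
    have honorm : onorm (fun i => Real.tanh (dd f i y) - EY i)
        = ∑ i, |Real.tanh (dd f i y) - EY i| := rfl
    rw [honorm, hhhdef]
    dsimp only
    rw [← Finset.sum_add_distrib]
    refine Finset.sum_le_sum fun i _ => ?_
    have hdd : dd (hamOf (tilt (gibbs f) θ)) i y = dd f i y + θ i := dd_hamOf f θ i y hy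
    have htr : |Real.tanh (dd f i y) - EY i|
        ≤ |Real.tanh (dd f i y) - t i y| + |t i y - EY i| := abs_sub_le _ _ _
    have hth : |Real.tanh (dd f i y) - t i y| ≤ |θ i| := by
      rw [htdef]
      dsimp only
      rw [hdd]
      refine le_trans (abs_tanh_sub_tanh _ _) ?_
      rw [show dd f i y - (dd f i y + θ i) = -θ i from by ring, abs_neg]
    linarith
  -- final chain
  have hfc1 : ∑ y ∈ cube n, ξ y * onorm (fun i => Real.tanh (dd f i y) - EY i)
      ≤ ∑ y ∈ cube n, ξ y * (hh y + ∑ i, |θ i|) := Finset.sum_le_sum hpoint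
  have hfc2 : ∑ y ∈ cube n, ξ y * (hh y + ∑ i, |θ i|)
      = (∑ y ∈ cube n, ξ y * hh y) + ∑ i, |θ i| := by
    rw [Finset.sum_congr rfl (fun y _ => mul_add (ξ y) (hh y) (∑ i, |θ i|)),
      Finset.sum_add_distrib, ← Finset.sum_mul, hξsum, one_mul]
  have hfc3 : ∑ y ∈ cube n, ξ y * hh y = ∑ y ∈ cube n, (∏ i, b i (y i)) * hh y :=
    Finset.sum_congr rfl fun y hy => by rw [hξprod y hy]
  have hfc4 : ∑ z ∈ cube n, tilt (gibbs f) θ z * hh z = A := by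
    have hz : ∀ z : Fin n → ℝ, tilt (gibbs f) θ z * hh z
        = ∑ k : Fin n, tilt (gibbs f) θ z * |t k z - EY k| := by
      intro z
      rw [hhhdef]
      dsimp only
      rw [Finset.mul_sum]
    rw [hAdef, Finset.sum_congr rfl fun z _ => hz z]
    exact Finset.sum_comm
  have hfc5 : ∑ y ∈ cube n, (∏ i, b i (y i)) * hh y ≤ A + L₂ * A := by
    have h1 := (abs_le.1 htel).2
    rw [hfc4] at h1
    linarith
  have hfc6 : A + L₂ * A ≤ 2 * L₂ * B := by nlinarith
  calc ∑ y ∈ cube n, ξ y * onorm (fun i => Real.tanh (dd f i y) - EY i)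
      ≤ (∑ y ∈ cube n, ξ y * hh y) + ∑ i, |θ i| := by rw [← hfc2]; exact hfc1
    _ ≤ (A + L₂ * A) + ε * n := by
        rw [hfc3]
        exact add_le_add hfc5 hθ1
    _ ≤ 2 * L₂ * B + ε * n := by linarith
    _ ≤ 64 * L₂ * (n : ℝ) ^ ((2 : ℝ) / 3) * D ^ ((1 : ℝ) / 3) / ε ^ ((1 : ℝ) / 3) + ε * n := by
        have hBX : 64 * L₂ * (n : ℝ) ^ ((2 : ℝ) / 3) * D ^ ((1 : ℝ) / 3) / ε ^ ((1 : ℝ) / 3)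
            = 4 * L₂ * B := by rw [hBdef]; ring
        rw [hBX]
        nlinarith


end Paper
end
end

section
/- Let f : C_n → ℝ with Lip(f) = L and let h : ℝ → ℝ be twice differentiable with |h''(x)| < B for all x ∈ ℝ. Then for every y ∈ C_n, ‖∇(h∘f)(y) − h'(f(y))·∇f(y)‖₁ ≤ B L² n. -/
/-! At a vertex `y` of the cube one of the two points defining `∂_i f(y)` is `y` itself, so the
`i`-th coordinate of `∇(h ∘ f)(y) - h'(f y) ∇f(y)` is, up to sign, half the second-order Taylor
remainder of `h` at `f y` over a step of length `2 |∂_i f(y)| ≤ 2 L`. The Lagrange form of that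
remainder bounds the coordinate by `B L²`, and there are `n` coordinates. -/

open MeasureTheory

noncomputable section

namespace Paper

open Set

theorem exists_ratio_hasDerivAt_eq_ratio_slope_of_ne {f f' g g' : ℝ → ℝ}
    (hf : ∀ x, HasDerivAt f (f' x) x) (hg : ∀ x, HasDerivAt g (g' x) x) {a b : ℝ} (hab : a ≠ b) :
    ∃ c ∈ uIoo a b, (g b - g a) * f' c = (f b - f a) * g' c := by
  have hfc : Continuous f := continuous_iff_continuousAt.2 fun x => (hf x).continuousAt
  have hgc : Continuous g := continuous_iff_continuousAt.2 fun x => (hg x).continuousAt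
  rcases hab.lt_or_gt with hlt | hgt
  · obtain ⟨c, hc, e⟩ := exists_ratio_hasDerivAt_eq_ratio_slope f f' hlt hfc.continuousOn
      (fun x _ => hf x) g g' hgc.continuousOn fun x _ => hg x
    exact ⟨c, uIoo_of_lt hlt ▸ hc, e⟩
  · obtain ⟨c, hc, e⟩ := exists_ratio_hasDerivAt_eq_ratio_slope f f' hgt hfc.continuousOn
      (fun x _ => hf x) g g' hgc.continuousOn fun x _ => hg x
    exact ⟨c, uIoo_of_gt hgt ▸ hc, by linear_combination -e⟩

theorem exists_taylor_mean_remainder_lagrange_two {h h' h'' : ℝ → ℝ}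
    (hd1 : ∀ x, HasDerivAt h (h' x) x) (hd2 : ∀ x, HasDerivAt h' (h'' x) x) (x a : ℝ) :
    ∃ c, h a - h x - h' x * (a - x) = h'' c / 2 * (a - x) ^ 2 := by
  rcases eq_or_ne x a with rfl | hxa
  · exact ⟨x, by ring⟩
  -- Cauchy's mean value theorem against `(t - x) ^ 2`, then the mean value theorem for `h'`.
  obtain ⟨c, hc, hcauchy⟩ := exists_ratio_hasDerivAt_eq_ratio_slope_of_ne
    (f := fun t => h t - h' x * t) (f' := fun t => h' t - h' x)
    (g := fun t => (t - x) ^ 2) (g' := fun t => 2 * (t - x))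
    (fun t => (hd1 t).sub ((hasDerivAt_id t).const_mul (h' x)) |>.congr_deriv (by simp))
    (fun t => ((hasDerivAt_id t).sub_const x).pow 2 |>.congr_deriv (by simp)) hxa
  have hcx : c ≠ x := by rintro rfl; simp [uIoo] at hc; linarith
  obtain ⟨d, -, hmvt⟩ := exists_ratio_hasDerivAt_eq_ratio_slope_of_ne hd2 hasDerivAt_id hcx.symm
  refine ⟨d, mul_right_cancel₀ (sub_ne_zero.2 hcx) ?_⟩
  simp only [id] at hmvt
  linear_combination (-1 / 2 : ℝ) * hcauchy - (a - x) ^ 2 / 2 * hmvt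

theorem abs_taylor_remainder_two_le {h h' h'' : ℝ → ℝ} {B : ℝ}
    (hd1 : ∀ x, HasDerivAt h (h' x) x) (hd2 : ∀ x, HasDerivAt h' (h'' x) x)
    (hB : ∀ x, |h'' x| ≤ B) (x a : ℝ) :
    |h a - h x - h' x * (a - x)| ≤ B / 2 * (a - x) ^ 2 := by
  obtain ⟨c, hc⟩ := exists_taylor_mean_remainder_lagrange_two hd1 hd2 x a
  rw [hc, abs_mul, abs_div, abs_two, abs_sq]
  gcongr
  exact hB c

theorem abs_dd_le_lip {n : ℕ} (f : (Fin n → ℝ) → ℝ) (i : Fin n) {y : Fin n → ℝ}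
    (hy : y ∈ cube n) : |dd f i y| ≤ lip f := by
  have hfin : {a | ∃ i : Fin n, ∃ y ∈ cube n, a = |dd f i y|}.Finite :=
    (finite_iUnion fun i => (cube n).finite_toSet.image fun y => |dd f i y|).subset
      (by rintro a ⟨i, y, hy, rfl⟩; exact mem_iUnion.2 ⟨i, y, hy, rfl⟩)
  exact le_csSup hfin.bddAbove ⟨i, y, hy, rfl⟩

theorem eq_neg_one_or_eq_one_of_mem_cube {n : ℕ} {y : Fin n → ℝ} (hy : y ∈ cube n) (i : Fin n) :
    y i = -1 ∨ y i = 1 := by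
  simpa using Fintype.mem_piFinset.1 hy i

theorem dd_eq_of_mem_cube {n : ℕ} (g : (Fin n → ℝ) → ℝ) (i : Fin n) {y : Fin n → ℝ}
    (hy : y ∈ cube n) : dd g i y = y i * (g y - g (Function.update y i (-y i))) / 2 := by
  rcases eq_neg_one_or_eq_one_of_mem_cube hy i with hyi | hyi
  · have e : Function.update y i (-1) = y := hyi ▸ Function.update_eq_self i y
    rw [dd, hyi, e, neg_neg]
    ring
  · have e : Function.update y i 1 = y := hyi ▸ Function.update_eq_self i y
    rw [dd, hyi, e]
    ring

theorem abs_dd_comp_sub_le {n : ℕ} (f : (Fin n → ℝ) → ℝ) {h h' h'' : ℝ → ℝ} {B : ℝ}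
    (hd1 : ∀ x, HasDerivAt h (h' x) x) (hd2 : ∀ x, HasDerivAt h' (h'' x) x)
    (hB : ∀ x, |h'' x| ≤ B) (i : Fin n) {y : Fin n → ℝ} (hy : y ∈ cube n) :
    |dd (h ∘ f) i y - h' (f y) * dd f i y| ≤ B * dd f i y ^ 2 := by
  set z := Function.update y i (-y i)
  have habs : |y i| = 1 := by
    rcases eq_neg_one_or_eq_one_of_mem_cube hy i with hyi | hyi <;> simp [hyi]
  have hsq : y i ^ 2 = 1 := by rw [← sq_abs, habs, one_pow]
  have hremainder := abs_taylor_remainder_two_le hd1 hd2 hB (f y) (f z)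
  rw [dd_eq_of_mem_cube _ i hy, dd_eq_of_mem_cube f i hy]
  calc |y i * ((h ∘ f) y - (h ∘ f) z) / 2 - h' (f y) * (y i * (f y - f z) / 2)|
      = |y i| * |h (f z) - h (f y) - h' (f y) * (f z - f y)| / 2 := by
        rw [← abs_mul, ← abs_two, ← abs_div, ← abs_neg]
        simp only [Function.comp_apply]
        ring_nf
    _ ≤ 1 * (B / 2 * (f z - f y) ^ 2) / 2 := by
        rw [habs]
        gcongr
    _ = B * (y i * (f y - f z) / 2) ^ 2 := by linear_combination (-B / 4 * (f y - f z) ^ 2) * hsq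

/-- Chain rule for the discrete gradient, ℓ¹ version on the cube.
If `Lip(f) = L` and `h` is twice differentiable with `|h''| < B`, then for every
`y ∈ C_n`, `‖∇(h∘f)(y) - h'(f(y))·∇f(y)‖₁ ≤ B L² n`. -/
theorem chain_rule_one_norm (n : ℕ) (f : (Fin n → ℝ) → ℝ)
    (L : ℝ) (hL : lip f = L)
    (h h' h'' : ℝ → ℝ) (B : ℝ)
    (hd1 : ∀ x, HasDerivAt h (h' x) x)
    (hd2 : ∀ x, HasDerivAt h' (h'' x) x)
    (hB : ∀ x, |h'' x| < B)
    (y : Fin n → ℝ) (hy : y ∈ cube n) :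
    onorm (fun i => dd (h ∘ f) i y - h' (f y) * dd f i y) ≤ B * L ^ 2 * n := by
  subst hL
  have hB' : ∀ x, |h'' x| ≤ B := fun x => (hB x).le
  have hB0 : 0 ≤ B := (abs_nonneg _).trans (hB' 0)
  have hcoord (i : Fin n) : |dd (h ∘ f) i y - h' (f y) * dd f i y| ≤ B * lip f ^ 2 :=
    calc _ ≤ B * dd f i y ^ 2 := abs_dd_comp_sub_le f hd1 hd2 hB' i hy
      _ ≤ B * lip f ^ 2 := by
        have hlip := abs_le.1 (abs_dd_le_lip f i hy)
        exact mul_le_mul_of_nonneg_left (sq_le_sq' hlip.1 hlip.2) hB0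
  calc onorm (fun i => dd (h ∘ f) i y - h' (f y) * dd f i y)
      ≤ ∑ _i : Fin n, B * lip f ^ 2 := Finset.sum_le_sum fun i _ => hcoord i
    _ = B * lip f ^ 2 * n := by simp [mul_comm]

end Paper
end
end
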